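/- If A and B are nilpotent n×n matrices with A + B = i·j, then (A+B) vanishes on the smallest subspace of K^n containing i and invariant under both A and B. Equivalently, (A+B)·p(A,B)·i = 0 for every noncommutative polynomial p. -/

import Mathlib

/-!
Over a reduced ring the reversed characteristic polynomial `det (1 - X • M)` of a nilpotent
matrix is `1`. Write `A + B = i j`. Since `A` is nilpotent, `1 - X • A` has the polynomial inverse
`∑ X ^ l • A ^ l`, and the matrix determinant lemma gives
`det (1 + X • B) = det (1 - X • A) * (1 + ∑ X ^ (l + 1) * j A ^ l i)`.
Both determinants are `1`, so `j A ^ l i = 0` for every `l`: the vector `i` lies in the largest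
`A`-invariant subspace `U` of `ker j`. On `U` we have `B = i j - A = -A`, so `U` is also
`B`-invariant, hence contains every `p(A, B) i`, and `A + B = i j` vanishes on it.
-/

open Matrix Polynomial Finset

namespace Matrix

variable {n R : Type*} [Fintype n] [DecidableEq n] [CommRing R]

theorem det_one_add_vecMulVec (u v : n → R) : det (1 + vecMulVec u v) = 1 + v ⬝ᵥ u := by
  rw [vecMulVec_eq Unit, det_one_add_replicateCol_mul_replicateRow]

theorem charpolyRev_eq_one_of_isNilpotent [IsReduced R] {A : Matrix n n R} (hA : IsNilpotent A) :
    A.charpolyRev = 1 := by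
  ext k
  rcases eq_or_ne k 0 with rfl | hk
  · rw [coeff_zero_eq_eval_zero, eval_charpolyRev, coeff_one_zero]
  · rw [coeff_one, if_neg hk]
    exact ((isUnit_iff_coeff_isUnit_isNilpotent.mp (isUnit_charpolyRev_of_isNilpotent hA)).2
      k hk).eq_zero

theorem charpolyRev_sub_vecMulVec {A : Matrix n n R} {m : ℕ} (hA : A ^ m = 0) (u v : n → R) :
    (A - vecMulVec u v).charpolyRev =
      A.charpolyRev * (1 + ∑ l ∈ range m, C (v ⬝ᵥ (A ^ l *ᵥ u)) * X ^ (l + 1)) := by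
  set N : Matrix n n R[X] := (X : R[X]) • A.map C
  set G : Matrix n n R[X] := ∑ l ∈ range m, N ^ l
  set u' : n → R[X] := C ∘ u
  set v' : n → R[X] := C ∘ v
  have hNm : N ^ m = 0 := by
    rw [_root_.smul_pow, ← C.mapMatrix_apply, ← map_pow, hA, map_zero, smul_zero]
  have hG : (1 - N) * G = 1 := by rw [mul_neg_geom_sum, hNm, sub_zero]
  have hfactor : 1 - (X : R[X]) • (A - vecMulVec u v).map C =
      (1 - N) * (1 + vecMulVec (G *ᵥ u') ((X : R[X]) • v')) := by
    rw [Matrix.mul_add, mul_one, mul_vecMulVec, mulVec_mulVec, hG, one_mulVec]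
    refine Matrix.ext fun a b => ?_
    simp only [N, u', v', sub_apply, add_apply, smul_apply, map_apply, vecMulVec_apply, map_sub,
      map_mul, smul_eq_mul, vecMulVec_smul, Function.comp_apply]
    ring
  rw [charpolyRev, hfactor, det_mul, det_one_add_vecMulVec]
  congr 2
  simp only [G, N, u', v', smul_dotProduct, sum_mulVec, dotProduct_sum]
  refine sum_congr rfl fun l _ => ?_
  have hC : v' ⬝ᵥ (A.map C) ^ l *ᵥ u' = C (v ⬝ᵥ A ^ l *ᵥ u) := by
    rw [← C.mapMatrix_apply, ← map_pow]
    simp [u', v', dotProduct, mulVec, map_sum]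
  rw [_root_.smul_pow, smul_mulVec, dotProduct_smul, hC, smul_eq_mul, smul_eq_mul, pow_succ]
  ring

theorem dotProduct_pow_mulVec_eq_zero_of_add_eq_vecMulVec [IsReduced R] {A B : Matrix n n R}
    (hA : IsNilpotent A) (hB : IsNilpotent B) {u v : n → R} (h : A + B = vecMulVec u v) (k : ℕ) :
    v ⬝ᵥ A ^ k *ᵥ u = 0 := by
  obtain ⟨m, hm⟩ := hA
  have hsub : A - vecMulVec u v = -B := by rw [← h]; abel
  have hsum : ∑ l ∈ range (m + k + 1), C (v ⬝ᵥ A ^ l *ᵥ u) * X ^ (l + 1) = 0 := by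
    have := charpolyRev_sub_vecMulVec (pow_eq_zero_of_le (by omega : m ≤ m + k + 1) hm) u v
    rwa [hsub, charpolyRev_eq_one_of_isNilpotent hB.neg,
      charpolyRev_eq_one_of_isNilpotent ⟨m, hm⟩, one_mul, left_eq_add] at this
  simpa [finsetSum_coeff, coeff_C_mul_X_pow] using congr_arg (coeff · (k + 1)) hsum

def kerDotProductPow (A : Matrix n n R) (v : n → R) : Submodule R (n → R) where
  carrier := {w | ∀ k : ℕ, v ⬝ᵥ A ^ k *ᵥ w = 0}
  add_mem' hw hw' k := by simp [mulVec_add, hw k, hw' k]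
  zero_mem' k := by simp
  smul_mem' c w hw k := by simp [mulVec_smul, hw k]

theorem mulVec_mem_kerDotProductPow {A : Matrix n n R} {v w : n → R}
    (hw : w ∈ kerDotProductPow A v) : A *ᵥ w ∈ kerDotProductPow A v := fun k => by
  rw [mulVec_mulVec, ← pow_succ]
  exact hw (k + 1)

theorem vecMulVec_mulVec_of_mem_kerDotProductPow {A : Matrix n n R} {u v w : n → R}
    (hw : w ∈ kerDotProductPow A v) : vecMulVec u v *ᵥ w = 0 := by
  simpa [vecMulVec_mulVec] using congr_arg (fun c => MulOpposite.op c • u) (hw 0)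

theorem mulVec_mem_kerDotProductPow_of_add_eq_vecMulVec {A B : Matrix n n R} {u v w : n → R}
    (h : A + B = vecMulVec u v) (hw : w ∈ kerDotProductPow A v) :
    B *ᵥ w ∈ kerDotProductPow A v := by
  have hB : B *ᵥ w = -(A *ᵥ w) := by
    rw [eq_neg_iff_add_eq_zero, ← add_mulVec, add_comm, h,
      vecMulVec_mulVec_of_mem_kerDotProductPow hw]
  rw [hB]
  exact neg_mem (mulVec_mem_kerDotProductPow hw)

end Matrix

theorem FreeAlgebra.lift_mulVec_mem {ι n R : Type*} [Fintype n] [DecidableEq n] [CommRing R]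
    {S : Submodule R (n → R)} {f : ι → Matrix n n R} (hf : ∀ x, ∀ w ∈ S, f x *ᵥ w ∈ S)
    (p : FreeAlgebra R ι) : ∀ w ∈ S, lift R f p *ᵥ w ∈ S := by
  induction p using FreeAlgebra.induction with
  | grade0 r =>
    intro w hw
    rw [AlgHom.commutes, Algebra.algebraMap_eq_smul_one, smul_mulVec, one_mulVec]
    exact S.smul_mem r hw
  | grade1 x => simpa using hf x
  | mul p q hp hq =>
    intro w hw
    rw [map_mul, ← mulVec_mulVec]
    exact hp _ (hq w hw)
  | add p q hp hq =>
    intro w hw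
    rw [map_add, add_mulVec]
    exact S.add_mem (hp w hw) (hq w hw)

theorem stmt2 {n : ℕ} {K : Type*} [Field K]
    (A B : Matrix (Fin n) (Fin n) K) (i j : Fin n → K)
    (hA : IsNilpotent A) (hB : IsNilpotent B)
    (h : A + B = Matrix.vecMulVec i j) :
    (∀ v ∈ Submodule.span K
        (Set.range fun p : FreeAlgebra K (Fin 2) => (FreeAlgebra.lift K ![A, B] p) *ᵥ i),
      (A + B) *ᵥ v = 0) ∧
    ∀ p : FreeAlgebra K (Fin 2),
      (A + B) *ᵥ ((FreeAlgebra.lift K ![A, B] p) *ᵥ i) = 0 := by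
  set U := kerDotProductPow A j
  have hi : i ∈ U := dotProduct_pow_mulVec_eq_zero_of_add_eq_vecMulVec hA hB h
  have hinv : ∀ x, ∀ w ∈ U, ![A, B] x *ᵥ w ∈ U := by
    intro x w hw
    fin_cases x
    · exact mulVec_mem_kerDotProductPow hw
    · exact mulVec_mem_kerDotProductPow_of_add_eq_vecMulVec h hw
  have hspan : Submodule.span K
      (Set.range fun p : FreeAlgebra K (Fin 2) => (FreeAlgebra.lift K ![A, B] p) *ᵥ i) ≤ U := by
    rw [Submodule.span_le]
    rintro _ ⟨p, rfl⟩
    exact FreeAlgebra.lift_mulVec_mem hinv p i hi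
  have hvanish : ∀ w ∈ U, (A + B) *ᵥ w = 0 := fun w hw => by
    rw [h, vecMulVec_mulVec_of_mem_kerDotProductPow hw]
  exact ⟨fun w hw => hvanish w (hspan hw),
    fun p => hvanish _ (hspan (Submodule.subset_span ⟨p, rfl⟩))⟩
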